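/- arXiv:2508.02286 — 4 statements merged into one kernel-verified Lean document; each statement's English description precedes it below -/
import Mathlib

section
/- Let α ∈ (0,2). Then for every x ∈ ℝ², ∫_{ℝ²} |x−y|^{−α} (1+|y|²)^{−(4−α)/2} dy = (2π/(2−α)) (1+|x|²)^{−α/2}. Equivalently, with U(x) := ((4−α)/2)·log(C_α/(1+|x|²)) and C_α := ((2−α)(4−α)/π)^{1/(4−α)}, one has ∫_{ℝ²} e^{U(y)}|x−y|^{−α} dy = (2(4−α)/C_α²) e^{αU(x)/(4−α)}. -/
/-!
Under stereographic projection, `(1 + |y|²)⁻² dy` is the rotation-invariant measure on the sphere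
and `|x - y|² / ((1 + |x|²)(1 + |y|²))` is the squared chordal distance, so the integrand at `x`
is `(1 + |x|²)^(-α/2)` times a function of the chordal distance from `x` against that measure.
The Möbius map `w ↦ (w + x) / (1 - x̄ w)` is a rotation of the sphere taking `0` to `x`;
substituting it reduces the integral at `x` to the one at `0`, a radial integral with the
explicit primitive `(r² / (1 + r²))^((2 - α)/2) / (2 - α)`. The second identity is the first one
multiplied by `C_α^((4 - α)/2)`, using `C_α^(4 - α) = (2 - α)(4 - α)/π`.
-/

open MeasureTheory Real

noncomputable def Ca (α : ℝ) : ℝ := ((2 - α) * (4 - α) / Real.pi) ^ ((1 : ℝ) / (4 - α))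

noncomputable def U (α : ℝ) (x : EuclideanSpace ℝ (Fin 2)) : ℝ :=
  ((4 - α) / 2) * Real.log (Ca α / (1 + ‖x‖ ^ 2))

open Set Filter Topology ComplexConjugate Module

theorem hasDerivAt_sq_div_one_add_sq_rpow {p r : ℝ} (hp : 0 < p) (hr : 0 < r) :
    HasDerivAt (fun r : ℝ => (r ^ 2 / (1 + r ^ 2)) ^ p / (2 * p))
      (r ^ (2 * p - 1) * (1 + r ^ 2) ^ (-(p + 1))) r := by
  have hB : 0 < 1 + r ^ 2 := by positivity
  have hf : HasDerivAt (fun r : ℝ => r ^ 2 / (1 + r ^ 2)) (2 * r / (1 + r ^ 2) ^ 2) r := by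
    refine ((hasDerivAt_pow 2 r).div ((hasDerivAt_pow 2 r).const_add 1) hB.ne').congr_deriv ?_
    field_simp
    ring
  refine ((hf.rpow_const (p := p) (Or.inl (by positivity))).div_const (2 * p)).congr_deriv ?_
  rw [show 2 * p - 1 = 2 * (p - 1) + 1 by ring, show -(p + 1) = -(p - 1) - 2 by ring,
    rpow_add hr, rpow_mul hr.le, rpow_sub hB, rpow_neg hB.le, div_rpow (by positivity) hB.le,
    rpow_one, rpow_two, rpow_two]
  field_simp

theorem integral_Ioi_rpow_mul_one_add_sq_rpow {p : ℝ} (hp : 0 < p) :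
    ∫ r in Ioi (0 : ℝ), r ^ (2 * p - 1) * (1 + r ^ 2) ^ (-(p + 1)) = 1 / (2 * p) := by
  have hcont : Continuous fun r : ℝ => r ^ 2 / (1 + r ^ 2) :=
    continuous_id.pow 2 |>.div (continuous_const.add (continuous_id.pow 2)) fun r => by positivity
  have hlim : Tendsto (fun r : ℝ => r ^ 2 / (1 + r ^ 2)) atTop (𝓝 1) := by
    have h : Tendsto (fun r : ℝ => 1 - (1 + r ^ 2)⁻¹) atTop (𝓝 (1 - 0)) :=
      tendsto_const_nhds.sub <| tendsto_inv_atTop_zero.comp <|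
        tendsto_atTop_add_const_left _ 1 (tendsto_pow_atTop two_ne_zero)
    rw [sub_zero] at h
    refine h.congr fun r => ?_
    field_simp
    ring
  rw [integral_Ioi_of_hasDerivAt_of_nonneg
    ((hcont.rpow_const fun _ => Or.inr hp.le).div_const _).continuousWithinAt
    (fun r hr => hasDerivAt_sq_div_one_add_sq_rpow hp hr)
    (fun r hr => by have : 0 < r := hr; positivity)
    (by simpa using
      ((continuousAt_rpow_const 1 p (Or.inl one_ne_zero)).tendsto.comp hlim).div_const (2 * p))]
  simp [zero_rpow hp.ne']

-- The powers of `m` cancel because `α + 2 * ((4 - α) / 2) = 4`.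
theorem rpow_conformal_weight (α : ℝ) {A B m : ℝ} (hA : 0 < A) (hB : 0 < B) (hm : 0 < m) :
    (A / m ^ 2) ^ 2 * ((A / m) ^ (-α) * (A * B / m ^ 2) ^ (-((4 - α) / 2)))
      = A ^ (-(α / 2)) * B ^ (-((4 - α) / 2)) := by
  refine Real.log_injOn_pos (mem_Ioi.mpr (by positivity)) (mem_Ioi.mpr (by positivity)) ?_
  simp (disch := positivity) only [Real.log_mul, Real.log_div, Real.log_rpow, Real.log_pow]
  push_cast
  ring

namespace Complex

theorem integral_norm_rpow_mul_one_add_norm_sq_rpow {α : ℝ} (hα : α < 2) :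
    ∫ y : ℂ, ‖y‖ ^ (-α) * (1 + ‖y‖ ^ 2) ^ (-((4 - α) / 2)) = 2 * π / (2 - α) := by
  have hp : 0 < (2 - α) / 2 := by linarith
  have hradial : ∫ r in Ioi (0 : ℝ), r ^ (2 - 1) • (r ^ (-α) * (1 + r ^ 2) ^ (-((4 - α) / 2)))
      = 1 / (2 - α) := by
    convert integral_Ioi_rpow_mul_one_add_sq_rpow hp using 1
    · refine setIntegral_congr_fun measurableSet_Ioi fun r (hr : 0 < r) => ?_
      rw [smul_eq_mul, Nat.add_one_sub_one, pow_one, ← mul_assoc, mul_comm r, ← rpow_add_one hr.ne']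
      ring_nf
    · ring
  rw [integral_fun_norm_addHaar volume (fun r => r ^ (-α) * (1 + r ^ 2) ^ (-((4 - α) / 2))),
    finrank_real_complex, hradial, measureReal_def, volume_ball]
  simp only [ENNReal.ofReal_one, one_pow, one_mul, ENNReal.coe_toReal, NNReal.coe_real_pi,
    smul_eq_mul, nsmul_eq_mul, Nat.cast_ofNat]
  ring

theorem det_smul_one (c : ℂ) : (c • (1 : ℂ →L[ℝ] ℂ)).det = normSq c := by
  have h : (c • (1 : ℂ →L[ℝ] ℂ)).toLinearMap = Algebra.lmul ℝ ℂ c := by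
    ext z; simp
  rw [ContinuousLinearMap.det, h, ← Algebra.norm_apply, Algebra.norm_complex_apply]

theorem ae_one_sub_mul_ne_zero (c : ℂ) : ∀ᵐ w : ℂ, 1 - c * w ≠ 0 := by
  refine measure_eq_zero_iff_ae_notMem.mp (Subsingleton.measure_zero ?_ _)
  intro a (ha : 1 - c * a = 0) b (hb : 1 - c * b = 0)
  have hc : c ≠ 0 := by rintro rfl; simp at ha
  exact mul_left_cancel₀ hc (by linear_combination hb - ha)

theorem normSq_one_sub_conj_mul_add_normSq_add (x w : ℂ) :
    normSq (1 - conj x * w) + normSq (w + x) = (1 + ‖x‖ ^ 2) * (1 + ‖w‖ ^ 2) := by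
  simp only [← normSq_eq_norm_sq, normSq_apply, sub_re, sub_im, add_re, add_im, mul_re, mul_im,
    one_re, one_im, conj_re, conj_im]
  ring

theorem one_add_conj_mul_self (x : ℂ) : 1 + conj x * x = ((1 + ‖x‖ ^ 2 : ℝ) : ℂ) := by
  rw [mul_comm, mul_conj, normSq_eq_norm_sq]
  push_cast
  rfl

/-- The rotation of the Riemann sphere taking `0` to `x`, in stereographic coordinates. -/
noncomputable def sphereRotation (x w : ℂ) : ℂ := (w + x) / (1 - conj x * w)

section sphereRotation

variable {x w : ℂ}

theorem one_add_conj_mul_sphereRotation (hw : 1 - conj x * w ≠ 0) :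
    1 + conj x * sphereRotation x w = (1 + conj x * x) / (1 - conj x * w) := by
  rw [sphereRotation, mul_div_assoc', one_add_div hw]
  congr 1
  ring

theorem sphereRotation_neg_sphereRotation (hw : 1 - conj x * w ≠ 0) :
    sphereRotation (-x) (sphereRotation x w) = w := by
  have hx : 1 + conj x * x ≠ 0 := by rw [one_add_conj_mul_self]; exact_mod_cast (by positivity)
  rw [sphereRotation, map_neg, neg_mul, sub_neg_eq_add, one_add_conj_mul_sphereRotation hw,
    sphereRotation, div_add' _ _ _ hw, div_div_div_cancel_right₀ hw, div_eq_iff hx]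
  ring

theorem mapsTo_sphereRotation (x : ℂ) :
    MapsTo (sphereRotation x) {w | 1 - conj x * w ≠ 0} {y | 1 + conj x * y ≠ 0} := fun w hw => by
  rw [mem_ofPred_eq, one_add_conj_mul_sphereRotation hw, one_add_conj_mul_self]
  exact div_ne_zero (by exact_mod_cast (by positivity)) hw

theorem bijOn_sphereRotation (x : ℂ) :
    BijOn (sphereRotation x) {w | 1 - conj x * w ≠ 0} {y | 1 + conj x * y ≠ 0} := by
  have hden (x : ℂ) : {y | 1 + conj x * y ≠ 0} = {y | 1 - conj (-x) * y ≠ 0} := by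
    simp only [map_neg, neg_mul, sub_neg_eq_add]
  refine InvOn.bijOn (f' := sphereRotation (-x))
    ⟨fun w hw => sphereRotation_neg_sphereRotation hw, fun y hy => ?_⟩ (mapsTo_sphereRotation x) ?_
  · rw [hden] at hy
    simpa using sphereRotation_neg_sphereRotation hy
  · simpa only [hden x, hden (-x), neg_neg] using mapsTo_sphereRotation (-x)

theorem hasDerivAt_sphereRotation (hw : 1 - conj x * w ≠ 0) :
    HasDerivAt (sphereRotation x) ((1 + conj x * x) / (1 - conj x * w) ^ 2) w := by
  refine (((hasDerivAt_id w).add_const x).div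
    (((hasDerivAt_id w).const_mul (conj x)).const_sub 1) hw).congr_deriv ?_
  simp only [id, mul_one, one_mul]
  congr 1
  ring

theorem norm_sub_sphereRotation (hw : 1 - conj x * w ≠ 0) :
    ‖x - sphereRotation x w‖ = ‖w‖ * ((1 + ‖x‖ ^ 2) / ‖1 - conj x * w‖) := by
  have h : x - sphereRotation x w = -(w * (1 + conj x * x)) / (1 - conj x * w) := by
    rw [sphereRotation, sub_div' hw]
    congr 1
    ring
  rw [h, norm_div, norm_neg, norm_mul, one_add_conj_mul_self, norm_real,
    Real.norm_of_nonneg (by positivity), mul_div_assoc]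

theorem one_add_norm_sphereRotation_sq (hw : 1 - conj x * w ≠ 0) :
    1 + ‖sphereRotation x w‖ ^ 2 = (1 + ‖x‖ ^ 2) * (1 + ‖w‖ ^ 2) / ‖1 - conj x * w‖ ^ 2 := by
  rw [sphereRotation, norm_div, div_pow, one_add_div (by simpa using hw),
    ← normSq_one_sub_conj_mul_add_normSq_add, normSq_eq_norm_sq, normSq_eq_norm_sq]

theorem integral_comp_sphereRotation (x : ℂ) (f : ℂ → ℝ) :
    ∫ y, f y = ∫ w, ((1 + ‖x‖ ^ 2) / ‖1 - conj x * w‖ ^ 2) ^ 2 * f (sphereRotation x w) := by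
  have hfull : ∀ c : ℂ, volume.restrict {w | 1 - c * w ≠ 0} = volume := fun c =>
    Measure.restrict_eq_self_of_ae_mem (ae_one_sub_mul_ne_zero c)
  have hopen : IsOpen {w | 1 - conj x * w ≠ 0} := isOpen_ne_fun (by fun_prop) (by fun_prop)
  have hderiv : ∀ w ∈ {w | 1 - conj x * w ≠ 0}, HasFDerivWithinAt (sphereRotation x)
      (((1 + conj x * x) / (1 - conj x * w) ^ 2) • (1 : ℂ →L[ℝ] ℂ)) {w | 1 - conj x * w ≠ 0} w :=
    fun w hw => (hasDerivAt_sphereRotation hw).complexToReal_fderiv.hasFDerivWithinAt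
  have hchange := integral_image_eq_integral_abs_det_fderiv_smul volume hopen.measurableSet hderiv
    (bijOn_sphereRotation x).injOn f
  have himage : {y | 1 + conj x * y ≠ 0} = {y | 1 - -conj x * y ≠ 0} := by
    simp only [neg_mul, sub_neg_eq_add]
  rw [(bijOn_sphereRotation x).image_eq, himage, hfull, hfull] at hchange
  rw [hchange]
  congr 1 with w
  rw [det_smul_one, abs_of_nonneg (normSq_nonneg _), normSq_eq_norm_sq, smul_eq_mul, norm_div,
    norm_pow, one_add_conj_mul_self, norm_real, Real.norm_of_nonneg (by positivity)]

end sphereRotation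

theorem integral_norm_sub_rpow_mul_one_add_norm_sq_rpow {α : ℝ} (hα : α < 2) (x : ℂ) :
    ∫ y : ℂ, ‖x - y‖ ^ (-α) * (1 + ‖y‖ ^ 2) ^ (-((4 - α) / 2))
      = 2 * π / (2 - α) * (1 + ‖x‖ ^ 2) ^ (-(α / 2)) := by
  rw [integral_comp_sphereRotation x, ← integral_norm_rpow_mul_one_add_norm_sq_rpow hα, mul_comm,
    ← integral_const_mul]
  refine integral_congr_ae ((ae_one_sub_mul_ne_zero (conj x)).mono fun w (hw : _ ≠ 0) => ?_)
  have hm : 0 < ‖1 - conj x * w‖ := norm_pos_iff.mpr hw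
  dsimp only
  rw [norm_sub_sphereRotation hw, one_add_norm_sphereRotation_sq hw,
    Real.mul_rpow (norm_nonneg w) (by positivity), mul_assoc, mul_left_comm,
    rpow_conformal_weight α (by positivity) (by positivity) hm, mul_left_comm]

end Complex

theorem integral_norm_sub_rpow_mul_one_add_norm_sq_rpow {E : Type*} [NormedAddCommGroup E]
    [InnerProductSpace ℝ E] [FiniteDimensional ℝ E] [MeasurableSpace E] [BorelSpace E]
    (hE : finrank ℝ E = 2) {α : ℝ} (hα : α < 2) (x : E) :
    ∫ y : E, ‖x - y‖ ^ (-α) * (1 + ‖y‖ ^ 2) ^ (-((4 - α) / 2))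
      = 2 * π / (2 - α) * (1 + ‖x‖ ^ 2) ^ (-(α / 2)) := by
  let e : ℂ ≃ₗᵢ[ℝ] E :=
    Complex.isometryOfOrthonormal ((stdOrthonormalBasis ℝ E).reindex (finCongr hE))
  rw [← integral_comp e]
  obtain ⟨z, rfl⟩ := e.surjective x
  simp only [← map_sub, LinearIsometryEquiv.norm_map]
  exact Complex.integral_norm_sub_rpow_mul_one_add_norm_sq_rpow hα z

theorem Ca_pos {α : ℝ} (hα : α < 2) : 0 < Ca α :=
  rpow_pos_of_pos (div_pos (by nlinarith) pi_pos) _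

theorem Ca_rpow {α : ℝ} (hα : α < 2) : Ca α ^ (4 - α) = (2 - α) * (4 - α) / π := by
  rw [Ca, ← rpow_mul (div_pos (by nlinarith) pi_pos).le, one_div_mul_cancel (by linarith), rpow_one]

theorem exp_mul_U {α : ℝ} (hα : α < 2) (t : ℝ) (y : EuclideanSpace ℝ (Fin 2)) :
    exp (t * U α y) = (Ca α / (1 + ‖y‖ ^ 2)) ^ (t * ((4 - α) / 2)) := by
  rw [U, ← mul_assoc, mul_comm, rpow_def_of_pos (div_pos (Ca_pos hα) (by positivity))]

theorem Ca_rpow_mul_two_pi_div {α : ℝ} (hα : α < 2) :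
    Ca α ^ ((4 - α) / 2) * (2 * π / (2 - α)) = 2 * (4 - α) / Ca α ^ 2 * Ca α ^ (α / 2) := by
  have hC := Ca_pos hα
  have h : Ca α ^ ((4 - α) / 2) * Ca α ^ (2 : ℝ) = Ca α ^ (α / 2) * ((2 - α) * (4 - α) / π) := by
    rw [← Ca_rpow hα, ← rpow_add hC, ← rpow_add hC]
    ring_nf
  rw [rpow_two] at h
  rw [div_mul_eq_mul_div, eq_div_iff (by positivity), mul_right_comm, h]
  field_simp [show 2 - α ≠ 0 by linarith]

theorem convolution_identity_general (α : ℝ) (hα' : α < 2) :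
    (∀ x : EuclideanSpace ℝ (Fin 2),
      (∫ y, 1 / ‖x - y‖ ^ α * (1 + ‖y‖ ^ 2) ^ (-((4 - α) / 2)))
        = 2 * Real.pi / (2 - α) * (1 + ‖x‖ ^ 2) ^ (-(α / 2))) ∧
    (∀ x : EuclideanSpace ℝ (Fin 2),
      (∫ y, Real.exp (U α y) / ‖x - y‖ ^ α)
        = 2 * (4 - α) / Ca α ^ 2 * Real.exp (α * U α x / (4 - α))) := by
  have hkernel (x y : EuclideanSpace ℝ (Fin 2)) : 1 / ‖x - y‖ ^ α = ‖x - y‖ ^ (-α) := by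
    rw [rpow_neg (norm_nonneg _), one_div]
  have hplane (x : EuclideanSpace ℝ (Fin 2)) := integral_norm_sub_rpow_mul_one_add_norm_sq_rpow
    finrank_euclideanSpace_fin hα' x
  refine ⟨fun x => by simpa only [hkernel] using hplane x, fun x => ?_⟩
  have hintegrand (y : EuclideanSpace ℝ (Fin 2)) :
      exp (U α y) / ‖x - y‖ ^ α
        = Ca α ^ ((4 - α) / 2) * (‖x - y‖ ^ (-α) * (1 + ‖y‖ ^ 2) ^ (-((4 - α) / 2))) := by
    rw [← one_mul (U α y), exp_mul_U hα', one_mul, div_rpow (Ca_pos hα').le (by positivity),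
      rpow_neg (norm_nonneg _), rpow_neg (by positivity : (0 : ℝ) ≤ 1 + ‖y‖ ^ 2)]
    ring
  have hrhs : exp (α * U α x / (4 - α)) = Ca α ^ (α / 2) * (1 + ‖x‖ ^ 2) ^ (-(α / 2)) := by
    rw [mul_div_right_comm, exp_mul_U hα', show α / (4 - α) * ((4 - α) / 2) = α / 2 by
      field_simp [show 4 - α ≠ 0 by linarith], div_rpow (Ca_pos hα').le (by positivity),
      rpow_neg (by positivity), div_eq_mul_inv]
  simp only [hintegrand, integral_const_mul, hplane, hrhs]
  rw [← mul_assoc, Ca_rpow_mul_two_pi_div hα', mul_assoc]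

theorem convolution_identity (α : ℝ) (hα : 0 < α) (hα' : α < 2) :
    (∀ x : EuclideanSpace ℝ (Fin 2),
      (∫ y, 1 / ‖x - y‖ ^ α * (1 + ‖y‖ ^ 2) ^ (-((4 - α) / 2)))
        = 2 * Real.pi / (2 - α) * (1 + ‖x‖ ^ 2) ^ (-(α / 2))) ∧
    (∀ x : EuclideanSpace ℝ (Fin 2),
      (∫ y, Real.exp (U α y) / ‖x - y‖ ^ α)
        = 2 * (4 - α) / Ca α ^ 2 * Real.exp (α * U α x / (4 - α))) :=
  convolution_identity_general α hα'
end

section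
/- There exists a constant C > 0 such that for every x ∈ ℝ², ∫_{ℝ²} |log|x−y|| · (1+|y|²)^{−2} dy ≤ C·(1 + log(1+|x|)). -/
/-!
For `‖x - y‖ < 1` we have `|log ‖x - y‖| ≤ ‖x - y‖⁻¹`, which is integrable near the origin in
dimension at least two; for `‖x - y‖ ≥ 1` we have `log ‖x - y‖ ≤ log (1 + ‖x‖) + log (1 + ‖y‖)`.
The weight `(1 + ‖y‖²)⁻²` is at most one and stays integrable after multiplication by
`log (1 + ‖y‖)`, so integrating the pointwise bound against it gives the estimate.
-/

open MeasureTheory Real Set Metric Module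

lemma abs_log_le_inv {r : ℝ} (hr : 0 ≤ r) (hr1 : r ≤ 1) : |log r| ≤ r⁻¹ := by
  rw [abs_of_nonpos (log_nonpos hr hr1), neg_le]
  exact neg_inv_le_log hr

lemma log_norm_sub_le {E : Type*} [SeminormedAddCommGroup E] (x y : E) :
    log ‖x - y‖ ≤ log (1 + ‖x‖) + log (1 + ‖y‖) := by
  rw [← log_mul (by positivity) (by positivity)]
  rcases (norm_nonneg (x - y)).eq_or_lt with h0 | hpos
  · rw [← h0, log_zero]
    exact log_nonneg (by nlinarith [norm_nonneg x, norm_nonneg y])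
  · refine log_le_log hpos ((norm_sub_le x y).trans ?_)
    nlinarith [norm_nonneg x, norm_nonneg y]

lemma abs_log_norm_sub_le {E : Type*} [SeminormedAddCommGroup E] (x y : E) :
    |log ‖x - y‖| ≤
      (ball 0 1).indicator (fun z => ‖z‖⁻¹) (x - y) + (log (1 + ‖x‖) + log (1 + ‖y‖)) := by
  have hx : 0 ≤ log (1 + ‖x‖) := log_nonneg (by simp)
  have hy : 0 ≤ log (1 + ‖y‖) := log_nonneg (by simp)
  by_cases h : ‖x - y‖ < 1
  · rw [indicator_of_mem (mem_ball_zero_iff.mpr h)]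
    linarith [abs_log_le_inv (norm_nonneg (x - y)) h.le]
  · rw [indicator_of_notMem (by simpa using h), abs_of_nonneg (log_nonneg (not_lt.mp h))]
    linarith [log_norm_sub_le x y]

variable {E : Type*} [NormedAddCommGroup E] [NormedSpace ℝ E] [FiniteDimensional ℝ E]
  [MeasurableSpace E] [BorelSpace E] {μ : Measure E} [μ.IsAddHaarMeasure]

lemma integrable_indicator_ball_norm_inv (hE : 2 ≤ finrank ℝ E) (R : ℝ) :
    Integrable ((ball (0 : E) R).indicator fun z => ‖z‖⁻¹) μ := by
  rw [integrable_indicator_iff measurableSet_ball]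
  refine integrableOn_ball_of_norm_le_rpow (C := 1) (α := 1) (by omega) (by exact_mod_cast hE)
    (ae_of_all _ fun z => ?_) (by fun_prop)
  simp [rpow_neg_one]

lemma integrable_log_one_add_norm_mul_rpow {r : ℝ} (hr : finrank ℝ E + 1 < r) :
    Integrable (fun y : E => log (1 + ‖y‖) * (1 + ‖y‖ ^ 2) ^ (-r / 2)) μ := by
  refine (integrable_rpow_neg_one_add_norm_sq (μ := μ) (r := r - 1) (by linarith)).mono'
    (by fun_prop) (ae_of_all _ fun y => ?_)
  have hpos : 0 < 1 + ‖y‖ ^ 2 := by positivity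
  have hlog : log (1 + ‖y‖) ≤ (1 + ‖y‖ ^ 2) ^ (1 / 2 : ℝ) := by
    rw [← sqrt_eq_rpow]
    calc log (1 + ‖y‖) ≤ ‖y‖ := by linarith [log_le_sub_one_of_pos (by positivity : 0 < 1 + ‖y‖)]
      _ ≤ √(1 + ‖y‖ ^ 2) := le_sqrt_of_sq_le (by linarith)
  rw [Real.norm_of_nonneg (mul_nonneg (log_nonneg (by simp)) (by positivity))]
  calc log (1 + ‖y‖) * (1 + ‖y‖ ^ 2) ^ (-r / 2)
      ≤ (1 + ‖y‖ ^ 2) ^ (1 / 2 : ℝ) * (1 + ‖y‖ ^ 2) ^ (-r / 2) := by gcongr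
    _ = (1 + ‖y‖ ^ 2) ^ (-(r - 1) / 2) := by rw [← rpow_add hpos]; ring_nf

lemma integral_abs_log_norm_sub_mul_le (hE : 2 ≤ finrank ℝ E) {w : E → ℝ}
    (hw_nonneg : ∀ y, 0 ≤ w y) (hw_le_one : ∀ y, w y ≤ 1) (hw : Integrable w μ)
    (hlogw : Integrable (fun y => log (1 + ‖y‖) * w y) μ) (x : E) :
    ∫ y, |log ‖x - y‖| * w y ∂μ ≤
      (∫ z in ball 0 1, ‖z‖⁻¹ ∂μ) + log (1 + ‖x‖) * (∫ y, w y ∂μ) +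
        ∫ y, log (1 + ‖y‖) * w y ∂μ := by
  set F : E → ℝ := (ball 0 1).indicator fun z => ‖z‖⁻¹
  have hF : Integrable (fun y => F (x - y)) μ :=
    (integrable_indicator_ball_norm_inv hE 1).comp_sub_left x
  have hF_nonneg : ∀ z, 0 ≤ F z := indicator_nonneg fun _ _ => by positivity
  have hxw : Integrable (fun y => log (1 + ‖x‖) * w y) μ := hw.const_mul _
  calc ∫ y, |log ‖x - y‖| * w y ∂μ
      ≤ ∫ y, F (x - y) + (log (1 + ‖x‖) * w y + log (1 + ‖y‖) * w y) ∂μ := by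
        refine integral_mono_of_nonneg (ae_of_all _ fun y => by have := hw_nonneg y; positivity)
          (hF.add (hxw.fun_add hlogw)) (ae_of_all _ fun y => ?_)
        have := mul_le_mul_of_nonneg_right (abs_log_norm_sub_le x y) (hw_nonneg y)
        nlinarith [hF_nonneg (x - y), hw_le_one y]
    _ = _ := by
        rw [integral_add hF (hxw.fun_add hlogw), integral_add hxw hlogw, integral_const_mul,
          integral_sub_left_eq_self, integral_indicator measurableSet_ball, add_assoc]

lemma exists_integral_abs_log_norm_sub_mul_rpow_le (hE : 2 ≤ finrank ℝ E) {r : ℝ}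
    (hr : finrank ℝ E + 1 < r) :
    ∃ C, 0 < C ∧ ∀ x : E,
      ∫ y, |log ‖x - y‖| * (1 + ‖y‖ ^ 2) ^ (-r / 2) ∂μ ≤ C * (1 + log (1 + ‖x‖)) := by
  set w : E → ℝ := fun y => (1 + ‖y‖ ^ 2) ^ (-r / 2)
  have hw_nonneg : ∀ y, 0 ≤ w y := fun y => by positivity
  have hlogw := integrable_log_one_add_norm_mul_rpow (μ := μ) hr
  set A := ∫ z in ball (0 : E) 1, ‖z‖⁻¹ ∂μ
  set W := ∫ y, w y ∂μ
  set L := ∫ y, log (1 + ‖y‖) * w y ∂μ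
  have hA : 0 ≤ A := setIntegral_nonneg measurableSet_ball fun z _ => by positivity
  have hW : 0 ≤ W := integral_nonneg hw_nonneg
  have hL : 0 ≤ L := integral_nonneg fun y => mul_nonneg (log_nonneg (by simp)) (hw_nonneg y)
  refine ⟨A + W + L + 1, by positivity, fun x => ?_⟩
  have hx : 0 ≤ log (1 + ‖x‖) := log_nonneg (by simp)
  calc _ ≤ A + log (1 + ‖x‖) * W + L :=
        integral_abs_log_norm_sub_mul_le hE hw_nonneg
          (fun y => rpow_le_one_of_one_le_of_nonpos (by simp) (by linarith))
          (integrable_rpow_neg_one_add_norm_sq (by linarith)) hlogw x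
    _ ≤ (A + W + L + 1) * (1 + log (1 + ‖x‖)) := by nlinarith

theorem log_kernel_estimate :
    ∃ C : ℝ, 0 < C ∧ ∀ x : EuclideanSpace ℝ (Fin 2),
      (∫ y, |Real.log ‖x - y‖| / (1 + ‖y‖ ^ 2) ^ 2)
        ≤ C * (1 + Real.log (1 + ‖x‖)) := by
  obtain ⟨C, hC, hbound⟩ := exists_integral_abs_log_norm_sub_mul_rpow_le
    (μ := (volume : Measure (EuclideanSpace ℝ (Fin 2)))) (r := 4) (by simp) (by norm_num)
  refine ⟨C, hC, fun x => le_of_eq_of_le ?_ (hbound x)⟩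
  congr 1 with y
  rw [div_eq_mul_inv, show -(4 : ℝ) / 2 = -(2 : ℕ) by norm_num, rpow_neg (by positivity),
    rpow_natCast]
end

section
/- The limit lim_{|x|→∞} ∫_{ℝ²} |log( |x−y| / |x| )| · (1+|y|²)^{−2} dy = 0 holds; that is, for every ε > 0 there exists R > 0 such that for all x ∈ ℝ² with |x| ≥ R one has ∫_{ℝ²} |log(|x−y|/|x|)|·(1+|y|²)^{−2} dy ≤ ε. -/
open MeasureTheory Real

local notation "E2" => EuclideanSpace ℝ (Fin 2)


lemma aux_half (r : ℝ) (hr : 0 ≤ r) : r / (1 + r^2)^2 ≤ 1/2 := by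
  rw [div_le_iff₀ (by positivity)]
  nlinarith [sq_nonneg (r - 1), sq_nonneg r, sq_nonneg (r^2)]

lemma aux_log {t : ℝ} (ht : 0 < t) : |Real.log t| ≤ 2 * |t - 1| / Real.sqrt t := by
  have hs : 0 < Real.sqrt t := Real.sqrt_pos.2 ht
  have hsq : Real.sqrt t * Real.sqrt t = t := Real.mul_self_sqrt ht.le
  have hlog : Real.log t = 2 * Real.log (Real.sqrt t) := by
    rw [Real.log_sqrt ht.le]; ring
  rw [le_div_iff₀ hs]
  rcases le_or_gt 1 t with h1 | h1
  · have hs1 : 1 ≤ Real.sqrt t := by nlinarith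
    have h3 : Real.log (Real.sqrt t) ≤ Real.sqrt t - 1 :=
      Real.log_le_sub_one_of_pos hs
    rw [abs_of_nonneg (Real.log_nonneg h1), abs_of_nonneg (by linarith)]
    nlinarith
  · have hs1 : Real.sqrt t ≤ 1 := by nlinarith
    have h3 : Real.log (Real.sqrt t)⁻¹ ≤ (Real.sqrt t)⁻¹ - 1 :=
      Real.log_le_sub_one_of_pos (inv_pos.2 hs)
    rw [Real.log_inv] at h3
    have h4 : (-Real.log (Real.sqrt t)) * Real.sqrt t ≤ ((Real.sqrt t)⁻¹ - 1) * Real.sqrt t :=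
      mul_le_mul_of_nonneg_right h3 hs.le
    have h5 : (Real.sqrt t)⁻¹ * Real.sqrt t = 1 := inv_mul_cancel₀ hs.ne'
    rw [abs_of_neg (Real.log_neg ht h1), abs_of_neg (by linarith)]
    nlinarith

noncomputable def psiAux : ℝ → ℝ :=
  (Set.Ioo (-1:ℝ) 1).indicator (fun t => |t| ^ (-(1/4) : ℝ))

lemma psiAux_eq (t : ℝ) :
    psiAux t = (Set.Ioo (-1:ℝ) 1).indicator (fun t => |t| ^ (-(1/4) : ℝ)) t := rfl

lemma psiAux_nonneg (t : ℝ) : 0 ≤ psiAux t :=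
  Set.indicator_nonneg (fun s _ => Real.rpow_nonneg (abs_nonneg s) _) t

lemma psiAux_integrable : Integrable psiAux := by
  rw [psiAux, integrable_indicator_iff measurableSet_Ioo]
  have habs : IntegrableOn (fun t : ℝ => |t| ^ (-(1/4) : ℝ)) (Set.Ioc 0 1) := by
    have := (intervalIntegral.intervalIntegrable_rpow' (a := 0) (b := 1)
      (r := -(1/4)) (by norm_num)).1
    apply this.congr_fun ?_ measurableSet_Ioc
    intro t ht
    simp only []
    rw [abs_of_pos ht.1]
  have hneg : IntegrableOn (fun t : ℝ => |t| ^ (-(1/4) : ℝ)) (Set.Ioc (-1) 0) := by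
    have h := (intervalIntegral.intervalIntegrable_rpow' (a := -1) (b := 0)
      (r := -(1/4)) (by norm_num)).1
    have h2 : IntegrableOn (fun t : ℝ => (Real.cos (-(1/4) * π))⁻¹ * t ^ (-(1/4):ℝ))
        (Set.Ioc (-1) 0) := h.const_mul _
    apply h2.congr_fun ?_ measurableSet_Ioc
    intro t ht
    simp only []
    rcases lt_or_eq_of_le ht.2 with h0 | h0
    · rw [Real.rpow_def_of_neg h0]
      have : Real.exp (Real.log t * (-(1/4))) = |t| ^ (-(1/4) : ℝ) := by
        rw [← Real.log_abs, Real.rpow_def_of_pos (abs_pos.2 h0.ne)]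
      rw [this]
      have hcos : Real.cos (-(1/4) * π) = Real.sqrt 2 / 2 := by
        rw [show (-(1/4) * π : ℝ) = -(π/4) by ring, Real.cos_neg, Real.cos_pi_div_four]
      rw [hcos]
      have h2 : Real.sqrt 2 / 2 ≠ 0 := by positivity
      field_simp
    · subst h0
      norm_num [Real.zero_rpow (by norm_num : (-(1/4):ℝ) ≠ 0)]
  have : Set.Ioo (-1:ℝ) 1 ⊆ Set.Ioc (-1) 0 ∪ Set.Ioc 0 1 := by
    intro t ht
    rcases le_or_gt t 0 with h | h
    · exact Or.inl ⟨ht.1, h⟩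
    · exact Or.inr ⟨h, ht.2.le⟩
  exact (hneg.union habs).mono_set this

lemma mp_coords : MeasurePreserving
    (fun z : E2 => ((z 0 : ℝ), (z 1 : ℝ))) volume volume := by
  have h1 := EuclideanSpace.volume_preserving_symm_measurableEquiv_toLp (Fin 2)
  have h2 := volume_preserving_piFinTwo (fun _ : Fin 2 => ℝ)
  exact h2.comp h1

lemma prod_psi_integrable : Integrable (fun z : E2 => psiAux (z 0) * psiAux (z 1)) := by
  have hP : Integrable (fun p : ℝ × ℝ => psiAux p.1 * psiAux p.2) := by
    rw [MeasureTheory.Measure.volume_eq_prod]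
    exact psiAux_integrable.mul_prod psiAux_integrable
  have := (mp_coords.integrable_comp hP.aestronglyMeasurable).mpr hP
  exact this

lemma coord_ne_zero_ae : ∀ᵐ z : E2, z 0 ≠ 0 ∧ z 1 ≠ 0 := by
  have h0 : volume {z : E2 | z 0 = 0} = 0 := by
    have : {z : E2 | z 0 = 0} =
        (fun z : E2 => ((z 0 : ℝ), (z 1 : ℝ))) ⁻¹' ({0} ×ˢ Set.univ) := by
      ext z; simp [eq_comm]
    rw [this, mp_coords.measure_preimage
      ((MeasurableSet.singleton 0).prod MeasurableSet.univ).nullMeasurableSet,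
      MeasureTheory.Measure.volume_eq_prod, Measure.prod_prod]
    simp
  have h1 : volume {z : E2 | z 1 = 0} = 0 := by
    have : {z : E2 | z 1 = 0} =
        (fun z : E2 => ((z 0 : ℝ), (z 1 : ℝ))) ⁻¹' (Set.univ ×ˢ {0}) := by
      ext z; simp [eq_comm]
    rw [this, mp_coords.measure_preimage
      (MeasurableSet.univ.prod (MeasurableSet.singleton 0)).nullMeasurableSet,
      MeasureTheory.Measure.volume_eq_prod, Measure.prod_prod]
    simp
  rw [ae_iff]
  refine measure_mono_null ?_ (measure_union_null h0 h1)
  intro z hz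
  simp only [Set.mem_setOf_eq, not_and_or, not_ne_iff] at hz
  rcases hz with h | h
  · exact Set.mem_union_left _ h
  · exact Set.mem_union_right _ h

lemma norm_sq_eq (z : E2) : ‖z‖^2 = (z 0)^2 + (z 1)^2 := by
  rw [EuclideanSpace.norm_eq]
  rw [Real.sq_sqrt (by positivity)]
  simp [Fin.sum_univ_two, sq_abs]

lemma inv_sqrt_integrableOn :
    IntegrableOn (fun z : E2 => (Real.sqrt ‖z‖)⁻¹) (Metric.ball 0 1) := by
  apply Integrable.mono' (prod_psi_integrable.restrict (s := Metric.ball 0 1))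
  · exact ((Real.continuous_sqrt.comp continuous_norm).measurable.inv).aestronglyMeasurable
  · rw [ae_restrict_iff' measurableSet_ball]
    filter_upwards [coord_ne_zero_ae] with z hz hball
    obtain ⟨h0, h1⟩ := hz
    have hzn : ‖z‖ < 1 := by simpa [dist_zero_right] using (Metric.mem_ball.1 hball)
    have ha : 0 < |z 0| := abs_pos.2 h0
    have hb : 0 < |z 1| := abs_pos.2 h1
    have ha1 : |z 0| < 1 := by
      nlinarith [norm_sq_eq z, sq_nonneg (z 1), norm_nonneg z, sq_abs (z 0)]
    have hb1 : |z 1| < 1 := by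
      nlinarith [norm_sq_eq z, sq_nonneg (z 0), norm_nonneg z, sq_abs (z 1)]
    have hpsi0 : psiAux (z 0) = |z 0| ^ (-(1/4) : ℝ) := by
      rw [psiAux_eq, Set.indicator_of_mem (by rw [Set.mem_Ioo, ← abs_lt]; exact ha1)]
    have hpsi1 : psiAux (z 1) = |z 1| ^ (-(1/4) : ℝ) := by
      rw [psiAux_eq, Set.indicator_of_mem (by rw [Set.mem_Ioo, ← abs_lt]; exact hb1)]
    rw [hpsi0, hpsi1, Real.norm_eq_abs]
    rw [abs_of_nonneg (by positivity)]
    -- key: (√‖z‖)⁻¹ ≤ (|z0| * |z1|) ^ (-(1/4))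
    have hprod : 0 < |z 0| * |z 1| := mul_pos ha hb
    have hge : Real.sqrt (|z 0| * |z 1|) ≤ ‖z‖ := by
      rw [show ‖z‖ = Real.sqrt (‖z‖^2) from (Real.sqrt_sq (norm_nonneg z)).symm]
      apply Real.sqrt_le_sqrt
      nlinarith [sq_abs (z 0), sq_abs (z 1), sq_nonneg (|z 0| - |z 1|), norm_sq_eq z]
    have h4 : (|z 0| * |z 1|) ^ ((1:ℝ)/4) ≤ Real.sqrt ‖z‖ := by
      have : (|z 0| * |z 1|) ^ ((1:ℝ)/4) = Real.sqrt (Real.sqrt (|z 0| * |z 1|)) := by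
        rw [Real.sqrt_eq_rpow, Real.sqrt_eq_rpow, ← Real.rpow_mul hprod.le]
        norm_num
      rw [this]
      exact Real.sqrt_le_sqrt hge
    have hpos4 : 0 < (|z 0| * |z 1|) ^ ((1:ℝ)/4) := Real.rpow_pos_of_pos hprod _
    calc (Real.sqrt ‖z‖)⁻¹ ≤ ((|z 0| * |z 1|) ^ ((1:ℝ)/4))⁻¹ := by
          apply inv_anti₀ hpos4 h4
      _ = (|z 0| * |z 1|) ^ (-(1/4) : ℝ) := by
          rw [Real.rpow_neg hprod.le]
      _ = |z 0| ^ (-(1/4) : ℝ) * |z 1| ^ (-(1/4) : ℝ) :=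
          Real.mul_rpow (abs_nonneg _) (abs_nonneg _)

lemma h2_integrable : Integrable (fun y : E2 => ‖y‖ / (1 + ‖y‖^2)^2) := by
  have hg : Integrable (fun y : E2 => 4 * (1 + ‖y‖) ^ (-(3:ℝ))) := by
    apply Integrable.const_mul
    apply integrable_one_add_norm (r := 3)
    simp [finrank_euclideanSpace_fin]
    norm_num
  apply hg.mono'
  · apply Continuous.aestronglyMeasurable
    apply continuous_norm.div (by continuity)
    intro y; positivity
  · filter_upwards with y
    rw [Real.norm_eq_abs, abs_of_nonneg (by positivity)]
    have h3 : (1 + ‖y‖) ^ (-(3:ℝ)) = ((1 + ‖y‖)^(3:ℕ))⁻¹ := by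
      rw [← Real.rpow_natCast (1 + ‖y‖) 3, ← Real.rpow_neg (by positivity)]
      norm_num
    rw [h3, div_le_iff₀ (by positivity)]
    rw [mul_comm (4:ℝ), mul_assoc, inv_mul_eq_div, le_div_iff₀ (by positivity)]
    have hn := norm_nonneg y
    nlinarith [sq_nonneg (‖y‖ - 1), sq_nonneg (‖y‖^2 - ‖y‖), sq_nonneg ‖y‖, sq_nonneg (‖y‖^2-1)]

theorem log_kernel_limit :
    ∀ ε : ℝ, 0 < ε → ∃ R : ℝ, 0 < R ∧ ∀ x : EuclideanSpace ℝ (Fin 2), R ≤ ‖x‖ →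
      (∫ y, |Real.log (‖x - y‖ / ‖x‖)| / (1 + ‖y‖ ^ 2) ^ 2) ≤ ε := by
  intro ε hε
  set φ : E2 → ℝ := fun z => (Metric.ball (0:E2) 1).indicator
    (fun z => (Real.sqrt ‖z‖)⁻¹ * (1/2)) z with hφ
  have φ_int : Integrable φ :=
    (integrable_indicator_iff measurableSet_ball).2 (inv_sqrt_integrableOn.mul_const _)
  have φ_nonneg : ∀ z, 0 ≤ φ z := fun z =>
    Set.indicator_nonneg (fun s _ => by positivity) z
  set C : ℝ := (∫ z : E2, φ z) + ∫ y : E2, ‖y‖ / (1 + ‖y‖^2)^2 with hCdef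
  have hC0 : 0 ≤ C := add_nonneg (integral_nonneg φ_nonneg)
    (integral_nonneg fun y => by positivity)
  refine ⟨(2*(C+1)/ε)^2 + 1, by positivity, fun x hx => ?_⟩
  have hb : (0:ℝ) < ‖x‖ := lt_of_lt_of_le (by positivity) hx
  have hsb : 0 < Real.sqrt ‖x‖ := Real.sqrt_pos.2 hb
  set h1 : E2 → ℝ := fun y => φ (x - y) with hh1
  have h1_int : Integrable h1 := φ_int.comp_sub_left x
  have h1_nonneg : ∀ y, 0 ≤ h1 y := fun y => φ_nonneg _
  have h1_val : (∫ y, h1 y) = ∫ z, φ z := integral_sub_left_eq_self φ volume x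
  set h2 : E2 → ℝ := fun y => ‖y‖ / (1 + ‖y‖^2)^2 with hh2
  have h2_nonneg : ∀ y, 0 ≤ h2 y := fun y => by positivity
  -- pointwise bound
  have key : ∀ y : E2, |Real.log (‖x - y‖ / ‖x‖)| / (1 + ‖y‖ ^ 2) ^ 2
      ≤ (2 / Real.sqrt ‖x‖) * (h1 y + h2 y) := by
    intro y
    rcases eq_or_ne y x with rfl | hyx
    · simp only [sub_self, norm_zero, zero_div, Real.log_zero, abs_zero]
      exact mul_nonneg (by positivity) (add_nonneg (h1_nonneg y) (h2_nonneg y))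
    · have ha : (0:ℝ) < ‖x - y‖ := by
        rw [norm_pos_iff, sub_ne_zero]; exact fun h => hyx h.symm
      have hsa : 0 < Real.sqrt ‖x - y‖ := Real.sqrt_pos.2 ha
      have ht : (0:ℝ) < ‖x - y‖ / ‖x‖ := div_pos ha hb
      have step1 := aux_log ht
      have step2 : |‖x - y‖ / ‖x‖ - 1| ≤ ‖y‖ / ‖x‖ := by
        have h1 : ‖x - y‖ / ‖x‖ - 1 = (‖x - y‖ - ‖x‖) / ‖x‖ := by field_simp
        rw [h1, abs_div, abs_of_pos hb]
        gcongr
        calc |‖x - y‖ - ‖x‖| ≤ ‖x - y - x‖ := abs_norm_sub_norm_le _ _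
          _ = ‖y‖ := by rw [show x - y - x = -y by abel, norm_neg]
      have step3 : Real.sqrt (‖x - y‖ / ‖x‖) = Real.sqrt ‖x - y‖ / Real.sqrt ‖x‖ :=
        Real.sqrt_div ha.le _
      have hD : (0:ℝ) < (1 + ‖y‖^2)^2 := by positivity
      have main : |Real.log (‖x - y‖ / ‖x‖)| ≤
          2 * ‖y‖ / (Real.sqrt ‖x‖ * Real.sqrt ‖x - y‖) := by
        refine step1.trans ?_
        rw [step3, div_div_eq_mul_div, div_le_div_iff₀ (by positivity) (by positivity)]
        have hbb : Real.sqrt ‖x‖ * Real.sqrt ‖x‖ = ‖x‖ := Real.mul_self_sqrt hb.le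
        calc 2 * |‖x - y‖ / ‖x‖ - 1| * Real.sqrt ‖x‖ * (Real.sqrt ‖x‖ * Real.sqrt ‖x - y‖)
            ≤ 2 * (‖y‖ / ‖x‖) * Real.sqrt ‖x‖ * (Real.sqrt ‖x‖ * Real.sqrt ‖x - y‖) := by
              gcongr
          _ = 2 * ‖y‖ * Real.sqrt ‖x - y‖ * ((Real.sqrt ‖x‖ * Real.sqrt ‖x‖) / ‖x‖) := by
              ring
          _ = 2 * ‖y‖ * Real.sqrt ‖x - y‖ := by rw [hbb, div_self hb.ne']; ring
    -- now divide by D and case split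
      have hmain2 : |Real.log (‖x - y‖ / ‖x‖)| / (1 + ‖y‖ ^ 2) ^ 2 ≤
          (2 / Real.sqrt ‖x‖) * (‖y‖ / (Real.sqrt ‖x - y‖ * (1 + ‖y‖^2)^2)) := by
        calc |Real.log (‖x - y‖ / ‖x‖)| / (1 + ‖y‖ ^ 2) ^ 2
            ≤ (2 * ‖y‖ / (Real.sqrt ‖x‖ * Real.sqrt ‖x - y‖)) / (1 + ‖y‖ ^ 2) ^ 2 := by
              gcongr
          _ = (2 / Real.sqrt ‖x‖) * (‖y‖ / (Real.sqrt ‖x - y‖ * (1 + ‖y‖^2)^2)) := by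
              rw [div_div, div_mul_div_comm]
              ring
      refine hmain2.trans ?_
      gcongr (2 / Real.sqrt ‖x‖) * ?_
      rcases lt_or_ge ‖x - y‖ 1 with hc | hc
      · have hmem : y ∈ Metric.ball x 1 := by
          rw [Metric.mem_ball, dist_eq_norm, ← norm_sub_rev]; exact hc
        have hh1y : h1 y = (Real.sqrt ‖x - y‖)⁻¹ * (1/2) := by
          rw [hh1, hφ]
          simp only []
          rw [Set.indicator_of_mem (by simpa [Metric.mem_ball, dist_zero_right] using hc)]
        calc ‖y‖ / (Real.sqrt ‖x - y‖ * (1 + ‖y‖^2)^2)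
            = (Real.sqrt ‖x - y‖)⁻¹ * (‖y‖ / (1 + ‖y‖^2)^2) := by field_simp
          _ ≤ (Real.sqrt ‖x - y‖)⁻¹ * (1/2) := by
              gcongr (Real.sqrt ‖x - y‖)⁻¹ * ?_
              exact aux_half ‖y‖ (norm_nonneg y)
          _ = h1 y := hh1y.symm
          _ ≤ h1 y + h2 y := le_add_of_nonneg_right (h2_nonneg y)
      · have hs1 : 1 ≤ Real.sqrt ‖x - y‖ := by
          rw [show (1:ℝ) = Real.sqrt 1 from (Real.sqrt_one).symm]
          exact Real.sqrt_le_sqrt hc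
        calc ‖y‖ / (Real.sqrt ‖x - y‖ * (1 + ‖y‖^2)^2)
            ≤ ‖y‖ / (1 * (1 + ‖y‖^2)^2) := by gcongr
          _ = h2 y := by rw [one_mul]
          _ ≤ h1 y + h2 y := le_add_of_nonneg_left (h1_nonneg y)
  -- integrate
  have step : (∫ y, |Real.log (‖x - y‖ / ‖x‖)| / (1 + ‖y‖ ^ 2) ^ 2)
      ≤ ∫ y, (2 / Real.sqrt ‖x‖) * (h1 y + h2 y) := by
    apply integral_mono_of_nonneg
    · filter_upwards with y; positivity
    · exact ((h1_int.add h2_integrable).const_mul _)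
    · filter_upwards with y; exact key y
  refine step.trans ?_
  have hval : (∫ y, (2 / Real.sqrt ‖x‖) * (h1 y + h2 y))
      = (2 / Real.sqrt ‖x‖) * C := by
    rw [integral_const_mul, integral_add h1_int h2_integrable, h1_val, hCdef]
  rw [hval]
  -- final numeric bound
  have hsR : 2 * (C + 1) / ε ≤ Real.sqrt ‖x‖ := by
    have h1' : ((2 * (C + 1) / ε))^2 ≤ ‖x‖ := by linarith
    calc 2 * (C + 1) / ε = Real.sqrt (((2 * (C + 1) / ε))^2) :=
          (Real.sqrt_sq (by positivity)).symm
      _ ≤ Real.sqrt ‖x‖ := Real.sqrt_le_sqrt h1'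
  have hpos : 0 < 2 * (C + 1) / ε := by positivity
  have hstep : 2 / Real.sqrt ‖x‖ ≤ 2 / (2 * (C + 1) / ε) :=
    div_le_div_of_nonneg_left (by norm_num) hpos hsR
  calc 2 / Real.sqrt ‖x‖ * C ≤ 2 / (2 * (C + 1) / ε) * C :=
        mul_le_mul_of_nonneg_right hstep hC0
    _ = ε * (C / (C + 1)) := by
        rw [div_div_eq_mul_div]
        field_simp
    _ ≤ ε * 1 := by
        apply mul_le_mul_of_nonneg_left ?_ hε.le
        apply div_le_one_of_le₀ (by linarith) (by linarith)
    _ = ε := mul_one ε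
end

section
/- Let α ∈ (0,2), set C_α := ((2−α)(4−α)/π)^{1/(4−α)}, and for an integer k ≥ 1 define λ_k(α) := C_α^{4−α}·2^{−(4−α)}·( μ_k(α) + μ₀(α) ) / ( k(k+1) ), where μ_k(α) := 2^{2−α}·π·Γ(k+α/2)·Γ((2−α)/2) / ( Γ(α/2)·Γ(k+2−α/2) ), so that μ₀(α) = 2^{3−α}π/(2−α) and μ₁(α) = 2^{3−α}πα/((2−α)(4−α)). Then λ₁(α) = 1, and λ_k(α) < 2/(k(k+1)) < 1 for every integer k ≥ 2. -/
/-!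
The Gamma recurrence gives `μ_{k+1}(α) = (k + α/2) / (k + 2 - α/2) · μ_k(α)`, a ratio below `1`
for `α < 2`, so `μ_k(α)` is strictly decreasing in `k`. Evaluating `μ₀` and `μ₁` explicitly shows
that the normalising constant makes the numerator of `λ₁` equal to `2`; for `k ≥ 2` the numerator
is strictly smaller, whence `λ_k(α) < 2 / (k(k+1))`.
-/

open Real

noncomputable def μFH (α : ℝ) (k : ℕ) : ℝ :=
  (2 : ℝ) ^ (2 - α) * Real.pi * Real.Gamma (k + α / 2) * Real.Gamma ((2 - α) / 2) /
    (Real.Gamma (α / 2) * Real.Gamma (k + 2 - α / 2))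

noncomputable def lamFH (α : ℝ) (k : ℕ) : ℝ :=
  Ca α ^ (4 - α) * (2 : ℝ) ^ (-(4 - α)) * (μFH α k + μFH α 0) / (k * (k + 1))

lemma Ca_rpow_four_sub {α : ℝ} (hα : α ≤ 2) : Ca α ^ (4 - α) = (2 - α) * (4 - α) / π := by
  rw [Ca, ← rpow_mul (div_nonneg (by nlinarith) pi_pos.le), one_div,
    inv_mul_cancel₀ (by linarith), rpow_one]

lemma μFH_succ {α : ℝ} (hα : 0 < α) (hα' : α < 4) (k : ℕ) :
    μFH α (k + 1) = (k + α / 2) / (k + 2 - α / 2) * μFH α k := by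
  have hk : (0 : ℝ) ≤ k := k.cast_nonneg
  simp only [μFH, Nat.cast_succ, add_right_comm _ (1 : ℝ), add_sub_right_comm _ (1 : ℝ)]
  rw [Gamma_add_one (by linarith), Gamma_add_one (by linarith)]
  simp only [div_eq_mul_inv, mul_inv]
  ring

lemma μFH_pos {α : ℝ} (hα : 0 < α) (hα' : α < 2) (k : ℕ) : 0 < μFH α k := by
  have hk : (0 : ℝ) ≤ k := k.cast_nonneg
  unfold μFH
  have := Gamma_pos_of_pos (show 0 < (k : ℝ) + α / 2 by linarith)
  have := Gamma_pos_of_pos (show 0 < (2 - α) / 2 by linarith)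
  have := Gamma_pos_of_pos (show 0 < α / 2 by linarith)
  have := Gamma_pos_of_pos (show 0 < (k : ℝ) + 2 - α / 2 by linarith)
  positivity

lemma μFH_strictAnti {α : ℝ} (hα : 0 < α) (hα' : α < 2) : StrictAnti (μFH α) := by
  refine strictAnti_nat_of_succ_lt fun k => ?_
  have hk : (0 : ℝ) ≤ k := k.cast_nonneg
  have hratio : ((k : ℝ) + α / 2) / (k + 2 - α / 2) < 1 := by
    rw [div_lt_one (by linarith)]; linarith
  rw [μFH_succ hα (by linarith)]
  exact mul_lt_of_lt_one_left (μFH_pos hα hα' k) hratio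

lemma μFH_zero {α : ℝ} (hα : 0 < α) (hα' : α < 2) :
    μFH α 0 = 2 ^ (3 - α) * π / (2 - α) := by
  have hΓ : Gamma (1 - α / 2) ≠ 0 := (Gamma_pos_of_pos (by linarith)).ne'
  have hΓ' : Gamma (α / 2) ≠ 0 := (Gamma_pos_of_pos (by linarith)).ne'
  have h2 : (2 : ℝ) ^ (3 - α) = 2 * 2 ^ (2 - α) := by
    rw [show 3 - α = 1 + (2 - α) by ring, rpow_add two_pos, rpow_one]
  simp only [μFH, Nat.cast_zero, zero_add, show (2 : ℝ) - α / 2 = 1 - α / 2 + 1 by ring,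
    show (2 - α) / 2 = 1 - α / 2 by ring]
  have h1 : 1 - α / 2 ≠ 0 := by linarith
  rw [Gamma_add_one h1, h2, div_eq_div_iff (mul_ne_zero hΓ' (mul_ne_zero h1 hΓ)) (by linarith)]
  ring

lemma μFH_one {α : ℝ} (hα : 0 < α) (hα' : α < 2) :
    μFH α 1 = 2 ^ (3 - α) * π * α / ((2 - α) * (4 - α)) := by
  have hsucc := μFH_succ hα (by linarith) 0
  rw [zero_add, Nat.cast_zero, zero_add, zero_add] at hsucc
  have : (2 : ℝ) - α ≠ 0 := by linarith
  rw [hsucc, μFH_zero hα hα', div_mul_div_comm,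
    div_eq_div_iff (mul_ne_zero (by linarith) this) (mul_ne_zero this (by linarith))]
  ring

lemma μFH_one_add_μFH_zero {α : ℝ} (hα : 0 < α) (hα' : α < 2) :
    μFH α 1 + μFH α 0 = 2 ^ (5 - α) * π / ((2 - α) * (4 - α)) := by
  have h4 : (2 : ℝ) ^ (5 - α) = 4 * 2 ^ (3 - α) := by
    rw [show 5 - α = 2 + (3 - α) by ring, rpow_add two_pos]; norm_num
  have : (4 : ℝ) - α ≠ 0 := by linarith
  have : (2 : ℝ) - α ≠ 0 := by linarith
  rw [μFH_one hα hα', μFH_zero hα hα', h4]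
  field_simp
  ring

lemma Ca_rpow_mul_μFH_one_add_μFH_zero {α : ℝ} (hα : 0 < α) (hα' : α < 2) :
    Ca α ^ (4 - α) * 2 ^ (-(4 - α)) * (μFH α 1 + μFH α 0) = 2 := by
  have : (4 : ℝ) - α ≠ 0 := by linarith
  have : (2 : ℝ) - α ≠ 0 := by linarith
  rw [Ca_rpow_four_sub hα'.le, μFH_one_add_μFH_zero hα hα']
  calc _ = (2 : ℝ) ^ (-(4 - α) + (5 - α)) := by rw [rpow_add two_pos]; field_simp
    _ = 2 := by norm_num

theorem eigenvalue_comparison (α : ℝ) (hα : 0 < α) (hα' : α < 2) :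
    lamFH α 1 = 1 ∧
    ∀ k : ℕ, 2 ≤ k → lamFH α k < 2 / (k * (k + 1)) ∧ (2 : ℝ) / (k * (k + 1)) < 1 := by
  have hsum := Ca_rpow_mul_μFH_one_add_μFH_zero hα hα'
  refine ⟨by rw [lamFH, hsum]; norm_num, fun k hk => ?_⟩
  have hk2 : (2 : ℝ) ≤ k := by exact_mod_cast hk
  have hden : (0 : ℝ) < k * (k + 1) := by positivity
  have hconst : 0 < Ca α ^ (4 - α) * (2 : ℝ) ^ (-(4 - α)) := by
    rw [Ca_rpow_four_sub hα'.le]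
    have : 0 < (2 - α) * (4 - α) := by nlinarith
    positivity
  have hμ : μFH α k < μFH α 1 := μFH_strictAnti hα hα' (by omega : 1 < k)
  refine ⟨?_, by rw [div_lt_one hden]; nlinarith⟩
  rw [lamFH, div_lt_div_iff_of_pos_right hden]
  calc Ca α ^ (4 - α) * 2 ^ (-(4 - α)) * (μFH α k + μFH α 0)
      < Ca α ^ (4 - α) * 2 ^ (-(4 - α)) * (μFH α 1 + μFH α 0) := by gcongr
    _ = 2 := hsum
end
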